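/- arXiv:2103.12175 — 4 statements merged into one kernel-verified Lean document; each statement's English description precedes it below -/
import Mathlib

section
/- Let γ be Gamma distributed with shape α > 0 and rate β > 0. Then E[log₂(1+γ)] = (β^α / (Γ(α) ln 2)) · ∑_{k=1}^∞ (1/k) · Γ(k+α) · U(k+α, 1+α, β), where U is the confluent hypergeometric Kummer U function. -/
/-- Confluent hypergeometric Kummer U function (integral representation, a > 0, z > 0). -/
noncomputable def KummerU (a b z : ℝ) : ℝ :=
  (1 / Real.Gamma a) *
    ∫ u in Set.Ioi (0 : ℝ), (1 + u) ^ (b - a - 1) * u ^ (a - 1) * Real.exp (-z * u)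

/-- Density of the Gamma(α, β) distribution on (0, ∞). -/
noncomputable def gammaDens (α β u : ℝ) : ℝ :=
  β ^ α * u ^ (α - 1) * Real.exp (-β * u) / Real.Gamma α

/-!
Writing `x = u / (1 + u)`, we have `log (1 + u) = -log (1 - x) = ∑ₖ x ^ (k + 1) / (k + 1)`,
and `x ^ (k + 1) * u ^ (α - 1) = (1 + u) ^ (b - a - 1) * u ^ (a - 1)` for `a = k + 1 + α`,
`b = 1 + α`. So the `k`-th term of the expansion of `log (1 + u) * u ^ (α - 1) * exp (-β u)`
is the integrand of `Γ(a) U(a, b, β)` divided by `k + 1`. All terms are nonnegative and their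
sum is integrable (`log (1 + u) ≤ u`), so the series may be integrated term by term.
-/

open MeasureTheory Set Real

theorem MeasureTheory.hasSum_integral_of_nonneg {X ι : Type*} [MeasurableSpace X] [Countable ι]
    {μ : Measure X} {F : ι → X → ℝ} {f : X → ℝ}
    (hF_meas : ∀ n, AEStronglyMeasurable (F n) μ) (hF_nonneg : ∀ n, 0 ≤ᵐ[μ] F n)
    (hf : Integrable f μ) (h_lim : ∀ᵐ x ∂μ, HasSum (fun n ↦ F n x) (f x)) :
    HasSum (fun n ↦ ∫ x, F n x ∂μ) (∫ x, f x ∂μ) :=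
  hasSum_integral_of_dominated_convergence F hF_meas
    (fun n ↦ (hF_nonneg n).mono fun _ hx ↦ (Real.norm_of_nonneg hx).le)
    (h_lim.mono fun _ hx ↦ hx.summable)
    (hf.congr (h_lim.mono fun _ hx ↦ hx.tsum_eq.symm)) h_lim

theorem Real.hasSum_pow_div_log_one_add {u : ℝ} (hu : 0 ≤ u) :
    HasSum (fun k : ℕ ↦ (u / (1 + u)) ^ (k + 1) / (k + 1)) (log (1 + u)) := by
  have h1u : 0 < 1 + u := by linarith
  have hx : |u / (1 + u)| < 1 := by
    rw [abs_of_nonneg (by positivity), div_lt_one h1u]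
    linarith
  have h1x : 1 - u / (1 + u) = (1 + u)⁻¹ := by
    field_simp
    ring
  simpa [h1x, log_inv] using hasSum_pow_div_log_of_abs_lt_one hx

noncomputable def kummerIntegrand (a b z u : ℝ) : ℝ :=
  (1 + u) ^ (b - a - 1) * u ^ (a - 1) * exp (-z * u)

theorem integral_kummerIntegrand {a : ℝ} (ha : 0 < a) (b z : ℝ) :
    ∫ u in Ioi 0, kummerIntegrand a b z u = Gamma a * KummerU a b z := by
  rw [KummerU, ← mul_assoc, mul_one_div_cancel (Gamma_pos_of_pos ha).ne', one_mul]
  rfl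

theorem continuousOn_kummerIntegrand (a b z : ℝ) :
    ContinuousOn (kummerIntegrand a b z) (Ioi 0) := by
  refine ContinuousOn.mul (ContinuousOn.mul ?_ ?_) (by fun_prop)
  · exact ContinuousOn.rpow_const (by fun_prop) fun u hu ↦ Or.inl (by simp at hu; positivity)
  · exact ContinuousOn.rpow_const continuousOn_id fun u hu ↦ Or.inl (ne_of_gt hu)

theorem kummerIntegrand_nonneg (a b z : ℝ) {u : ℝ} (hu : 0 ≤ u) :
    0 ≤ kummerIntegrand a b z u := by
  unfold kummerIntegrand
  positivity

theorem div_one_add_pow_mul_rpow {u : ℝ} (hu : 0 < u) (α : ℝ) (k : ℕ) :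
    (u / (1 + u)) ^ (k + 1) * u ^ (α - 1) =
      (1 + u) ^ ((1 + α) - ((k + 1) + α) - 1) * u ^ (((k + 1) + α) - 1) := by
  have h1u : 0 < 1 + u := by linarith
  rw [show (1 + α) - ((k + 1) + α) - 1 = -((k + 1 : ℕ) : ℝ) by push_cast; ring,
    show ((k + 1) + α) - 1 = ((k + 1 : ℕ) : ℝ) + (α - 1) by push_cast; ring,
    rpow_neg h1u.le, rpow_add hu, rpow_natCast, rpow_natCast, div_pow]
  ring

theorem hasSum_kummerIntegrand (α β : ℝ) {u : ℝ} (hu : 0 < u) :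
    HasSum (fun k : ℕ ↦ 1 / ((k : ℝ) + 1) * kummerIntegrand ((k + 1) + α) (1 + α) β u)
      (log (1 + u) * (u ^ (α - 1) * exp (-β * u))) := by
  refine ((hasSum_pow_div_log_one_add hu.le).mul_right (u ^ (α - 1) * exp (-β * u))).congr_fun
    fun k ↦ ?_
  rw [kummerIntegrand, ← div_one_add_pow_mul_rpow hu]
  ring

theorem integrableOn_log_one_add_mul_rpow_mul_exp {α β : ℝ} (hα : 0 < α) (hβ : 0 < β) :
    IntegrableOn (fun u ↦ log (1 + u) * (u ^ (α - 1) * exp (-β * u))) (Ioi 0) := by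
  have hdom : IntegrableOn (fun u : ℝ ↦ u ^ α * exp (-β * u)) (Ioi 0) := by
    simpa using integrableOn_rpow_mul_exp_neg_mul_rpow (p := 1) (by linarith) one_pos hβ
  refine hdom.mono' ?_ ((ae_restrict_iff' measurableSet_Ioi).2 (.of_forall fun u hu ↦ ?_))
  · refine ContinuousOn.aestronglyMeasurable ?_ measurableSet_Ioi
    refine ContinuousOn.mul ?_ (ContinuousOn.mul ?_ (by fun_prop))
    · exact (continuousOn_const.add continuousOn_id).log fun u hu ↦ (add_pos one_pos hu).ne'
    · exact ContinuousOn.rpow_const continuousOn_id fun u hu ↦ Or.inl (ne_of_gt hu)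
  · have hu : 0 < u := hu
    have hlog_le : log (1 + u) ≤ u := by
      linarith [log_le_sub_one_of_pos (x := 1 + u) (by linarith)]
    have hlog_nonneg : 0 ≤ log (1 + u) := log_nonneg (by linarith)
    calc ‖log (1 + u) * (u ^ (α - 1) * exp (-β * u))‖
        = log (1 + u) * (u ^ (α - 1) * exp (-β * u)) := norm_of_nonneg (by positivity)
      _ ≤ u * (u ^ (α - 1) * exp (-β * u)) := by gcongr
      _ = u ^ α * exp (-β * u) := by
        rw [← mul_assoc, ← rpow_one_add' hu.le (by linarith)]
        ring_nf

theorem hasSum_gamma_mul_kummerU {α β : ℝ} (hα : 0 < α) (hβ : 0 < β) :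
    HasSum
      (fun k : ℕ ↦ 1 / ((k : ℝ) + 1) * Gamma ((k + 1) + α) * KummerU ((k + 1) + α) (1 + α) β)
      (∫ u in Ioi 0, log (1 + u) * (u ^ (α - 1) * exp (-β * u))) := by
  have ha_pos (k : ℕ) : 0 < ((k : ℝ) + 1) + α := by positivity
  have h := hasSum_integral_of_nonneg
    (F := fun (k : ℕ) u ↦ 1 / ((k : ℝ) + 1) * kummerIntegrand ((k + 1) + α) (1 + α) β u)
    (fun k ↦ (continuousOn_const.mul
      (continuousOn_kummerIntegrand _ _ _)).aestronglyMeasurable measurableSet_Ioi)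
    (fun k ↦ (ae_restrict_iff' measurableSet_Ioi).2 (.of_forall fun u hu ↦
      mul_nonneg (by positivity) (kummerIntegrand_nonneg _ _ _ (le_of_lt hu))))
    (integrableOn_log_one_add_mul_rpow_mul_exp hα hβ)
    ((ae_restrict_iff' measurableSet_Ioi).2
      (.of_forall fun u hu ↦ hasSum_kummerIntegrand α β hu))
  simpa only [integral_const_mul, integral_kummerIntegrand (ha_pos _), mul_assoc] using h

theorem expected_log_capacity_gamma (α β : ℝ) (hα : 0 < α) (hβ : 0 < β) :
    (∫ u in Set.Ioi (0 : ℝ), Real.logb 2 (1 + u) * gammaDens α β u) =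
      β ^ α / (Real.Gamma α * Real.log 2) *
        ∑' k : ℕ, (1 / ((k : ℝ) + 1)) * Real.Gamma (((k : ℝ) + 1) + α) *
          KummerU (((k : ℝ) + 1) + α) (1 + α) β := by
  rw [(hasSum_gamma_mul_kummerU hα hβ).tsum_eq, ← integral_const_mul]
  refine setIntegral_congr_fun measurableSet_Ioi fun u _ ↦ ?_
  simp only [gammaDens, logb]
  field_simp
end

section
/- Let γ be Gamma distributed with shape α > 0 and rate β > 0. Then E[√(1 − 1/(1+γ)²)] = β^α · ∑_{n=0}^∞ (−1)^n C(1/2, n) · U(α, 1−2n+α, β), where C(1/2,n) are generalized binomial coefficients and U is the Kummer U function. -/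
/-- Generalized binomial coefficient C(1/2, n). -/
noncomputable def genBinomHalf (n : ℕ) : ℝ :=
  (∏ i ∈ Finset.range n, ((1 : ℝ) / 2 - i)) / (Nat.factorial n)

/-!
Expand `√(1 - x) = ∑ (-1)ⁿ C(1/2, n) xⁿ` at `x = (1 + u)⁻² ∈ (0, 1)` and integrate term by term
against the Gamma density. Dominated convergence applies because `∑ |C(1/2, n)|` converges: the
terms `(-1)ⁿ C(1/2, n)`, `n ≥ 1`, are all `≤ 0`, and `(n + 1) C(1/2, n + 1) = (1/2 - n) C(1/2, n)`
makes their partial sums telescope. Against the Gamma density, `(1 + u)^(-2n)` integrates to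
`β^α U(α, 1 - 2n + α, β)` directly from the integral representation of `U`.
-/

open MeasureTheory Set

noncomputable def sqrtOneSubCoeff (n : ℕ) : ℝ := (-1) ^ n * genBinomHalf n

theorem genBinomHalf_eq_choose (n : ℕ) : genBinomHalf n = Ring.choose (1 / 2 : ℝ) n := by
  rw [Ring.choose_eq_smul, genBinomHalf, ← descPochhammer_eval_eq_prod_range,
    ← Polynomial.aeval_eq_smeval, Polynomial.aeval_def, Polynomial.eval₂_eq_eval_map,
    descPochhammer_map, smul_eq_mul, div_eq_inv_mul]

theorem hasSum_sqrtOneSubCoeff_mul_pow {x : ℝ} (hx : |x| < 1) :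
    HasSum (fun n ↦ sqrtOneSubCoeff n * x ^ n) (√(1 - x)) := by
  have h := (Real.one_add_rpow_hasFPowerSeriesOnBall_zero (a := (1 / 2 : ℝ))).hasSum (y := -x)
    (by simpa [← ofReal_norm, Real.norm_eq_abs] using hx)
  simp only [FormalMultilinearSeries.apply_eq_pow_smul_coeff, binomialSeries,
    FormalMultilinearSeries.coeff_ofScalars, zero_add, smul_eq_mul] at h
  have hcoeff (n : ℕ) : (-x) ^ n * Ring.choose (1 / 2 : ℝ) n = sqrtOneSubCoeff n * x ^ n := by
    rw [sqrtOneSubCoeff, genBinomHalf_eq_choose, neg_pow]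
    ring
  simp only [hcoeff] at h
  rwa [Real.sqrt_eq_rpow, sub_eq_add_neg]

theorem sqrtOneSubCoeff_zero : sqrtOneSubCoeff 0 = 1 := by
  simp [sqrtOneSubCoeff, genBinomHalf]

theorem sqrtOneSubCoeff_succ (n : ℕ) :
    sqrtOneSubCoeff (n + 1) = sqrtOneSubCoeff n * ((n - 1 / 2) / (n + 1)) := by
  simp only [sqrtOneSubCoeff, genBinomHalf, Finset.prod_range_succ, Nat.factorial_succ]
  push_cast
  field_simp
  ring

theorem sqrtOneSubCoeff_succ_nonpos (n : ℕ) : sqrtOneSubCoeff (n + 1) ≤ 0 := by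
  induction n with
  | zero => norm_num [sqrtOneSubCoeff_succ, sqrtOneSubCoeff_zero]
  | succ n ih =>
    rw [sqrtOneSubCoeff_succ]
    refine mul_nonpos_of_nonpos_of_nonneg ih (div_nonneg ?_ (by positivity))
    push_cast
    linarith [n.cast_nonneg (α := ℝ)]

theorem sum_range_neg_sqrtOneSubCoeff_succ_le_one (N : ℕ) :
    ∑ n ∈ Finset.range N, -sqrtOneSubCoeff (n + 1) ≤ 1 := by
  set d : ℕ → ℝ := fun n ↦ 2 * (n + 1) * sqrtOneSubCoeff (n + 1)
  have htelescope : ∀ n, sqrtOneSubCoeff (n + 1) = d n - d (n + 1) := fun n ↦ by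
    simp only [d, sqrtOneSubCoeff_succ (n + 1)]
    push_cast
    field_simp
    ring
  have hdN : d N ≤ 0 :=
    mul_nonpos_of_nonneg_of_nonpos (by positivity) (sqrtOneSubCoeff_succ_nonpos N)
  have hd0 : d 0 = -1 := by norm_num [d, sqrtOneSubCoeff_succ, sqrtOneSubCoeff_zero]
  simp only [htelescope, neg_sub, Finset.sum_range_sub (fun n ↦ d n), hd0]
  linarith

theorem summable_abs_sqrtOneSubCoeff : Summable fun n ↦ |sqrtOneSubCoeff n| := by
  rw [← summable_nat_add_iff 1]
  simp only [abs_of_nonpos (sqrtOneSubCoeff_succ_nonpos _)]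
  exact summable_of_sum_range_le (fun n ↦ neg_nonneg.2 (sqrtOneSubCoeff_succ_nonpos n))
    sum_range_neg_sqrtOneSubCoeff_succ_le_one

theorem hasSum_integral_sqrtOneSubCoeff_mul_pow_mul {Ω : Type*} [MeasurableSpace Ω]
    {μ : Measure Ω} {f g : Ω → ℝ} (hf : AEStronglyMeasurable f μ)
    (hf_lt : ∀ᵐ ω ∂μ, |f ω| < 1) (hg : Integrable g μ) :
    HasSum (fun n ↦ ∫ ω, sqrtOneSubCoeff n * f ω ^ n * g ω ∂μ) (∫ ω, √(1 - f ω) * g ω ∂μ) := by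
  refine hasSum_integral_of_dominated_convergence (fun n ω ↦ |sqrtOneSubCoeff n| * ‖g ω‖)
    (fun n ↦ (aestronglyMeasurable_const.mul (hf.pow n)).mul hg.aestronglyMeasurable)
    (fun n ↦ ?_) (ae_of_all _ fun ω ↦ summable_abs_sqrtOneSubCoeff.mul_right _) ?_
    (hf_lt.mono fun ω hω ↦ (hasSum_sqrtOneSubCoeff_mul_pow hω).mul_right _)
  · filter_upwards [hf_lt] with ω hω
    rw [norm_mul, norm_mul, norm_pow, Real.norm_eq_abs, Real.norm_eq_abs]
    gcongr
    exact mul_le_of_le_one_right (abs_nonneg _) (pow_le_one₀ (abs_nonneg _) hω.le)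
  · simp_rw [tsum_mul_right]
    exact hg.norm.const_mul _

theorem integrableOn_gammaDens {α β : ℝ} (hα : 0 < α) (hβ : 0 < β) :
    IntegrableOn (gammaDens α β) (Ioi 0) := by
  have h := integrableOn_rpow_mul_exp_neg_mul_rpow (s := α - 1) (p := 1) (by linarith) one_pos hβ
  simp only [Real.rpow_one] at h
  refine IntegrableOn.congr_fun (h.const_mul (β ^ α / Real.Gamma α)) (fun u _ ↦ ?_)
    measurableSet_Ioi
  rw [gammaDens]
  ring

theorem setIntegral_one_add_rpow_mul_gammaDens (a b β : ℝ) :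
    ∫ u in Ioi 0, (1 + u) ^ (b - a - 1) * gammaDens a β u = β ^ a * KummerU a b β := by
  simp only [gammaDens, KummerU, ← integral_const_mul]
  congr 1 with u
  ring

theorem expected_sqrt_dispersion_gamma (α β : ℝ) (hα : 0 < α) (hβ : 0 < β) :
    (∫ u in Set.Ioi (0 : ℝ), Real.sqrt (1 - 1 / (1 + u) ^ 2) * gammaDens α β u) =
      β ^ α * ∑' n : ℕ, (-1 : ℝ) ^ n * genBinomHalf n *
        KummerU α (1 - 2 * (n : ℝ) + α) β := by
  have hlt : ∀ u ∈ Ioi (0 : ℝ), |1 / (1 + u) ^ 2| < 1 := fun u (hu : 0 < u) ↦ by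
    rw [abs_of_pos (by positivity), div_lt_one (by positivity)]
    nlinarith
  have hterm (n : ℕ) : ∫ u in Ioi 0, sqrtOneSubCoeff n * (1 / (1 + u) ^ 2) ^ n * gammaDens α β u
      = β ^ α * ((-1) ^ n * genBinomHalf n * KummerU α (1 - 2 * n + α) β) := by
    have hpow : ∀ u ∈ Ioi (0 : ℝ), (1 / (1 + u) ^ 2) ^ n = (1 + u) ^ ((1 - 2 * n + α) - α - 1) :=
      fun u (hu : 0 < u) ↦ by
        rw [show (1 - 2 * n + α) - α - 1 = -((2 * n : ℕ) : ℝ) by push_cast; ring,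
          Real.rpow_neg (by positivity), Real.rpow_natCast, pow_mul, one_div, inv_pow]
    rw [setIntegral_congr_fun measurableSet_Ioi fun u hu ↦ by rw [hpow u hu, mul_assoc],
      integral_const_mul, setIntegral_one_add_rpow_mul_gammaDens, sqrtOneSubCoeff]
    ring
  have hmeas : Measurable fun u : ℝ ↦ 1 / (1 + u) ^ 2 := by fun_prop
  have hsum := hasSum_integral_sqrtOneSubCoeff_mul_pow_mul hmeas.aestronglyMeasurable
    ((ae_restrict_iff' measurableSet_Ioi).2 (ae_of_all _ hlt)) (integrableOn_gammaDens hα hβ)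
  rw [← hsum.tsum_eq, ← tsum_mul_left]
  exact tsum_congr hterm
end

section
/- Let γ be Gamma distributed with shape α > 0 and rate β > 0. Then ∫₀^∞ (1+u)^{−2} · β^α u^{α−1} e^{−βu}/Γ(α) du = β − 1 + e^β β (1 − α − β) E_α(β) + 1, equivalently E[(1+γ)^{−2}] = β − e^β β (α + β − 1) E_α(β), where E_α(β) = ∫₁^∞ e^{−βt} t^{−α} dt. -/
/-- Generalized exponential integral E_n(z) = ∫₁^∞ e^{−zt} t^{−n} dt. -/
noncomputable def expIntE (n z : ℝ) : ℝ :=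
  ∫ t in Set.Ioi (1 : ℝ), Real.exp (-z * t) * t ^ (-n)

open MeasureTheory Real Set Filter Topology

/-!
Writing `(1 + u)⁻² = β² ∫₀^∞ t e^{-β(1+u)t} dt` and exchanging the integrals, the inner
`u`-integral is the Laplace transform `(1 + t)^{-α}` of the Gamma density, so the moment equals
`β² ∫₀^∞ t e^{-βt} (1 + t)^{-α} dt`. Integrating the derivative of `e^{-βt} (1 + t)^{1-α}` over
`(0, ∞)` expresses this through `∫₀^∞ e^{-βt} (1 + t)^{-α} dt`, which is `e^β E_α(β)` after the
shift `t ↦ t + 1`.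
-/

lemma setIntegral_Ioi_comp_add_right {E : Type*} [NormedAddCommGroup E] [NormedSpace ℝ E]
    (f : ℝ → E) (a d : ℝ) : ∫ x in Ioi a, f (x + d) = ∫ x in Ioi (a + d), f x := by
  have h := (measurePreserving_add_right volume d).setIntegral_preimage_emb
    (Homeomorph.addRight d).measurableEmbedding f (Ioi (a + d))
  rwa [preimage_add_const_Ioi, add_sub_cancel_right] at h

lemma integrableOn_mul_exp_neg_mul {b : ℝ} (hb : 0 < b) :
    IntegrableOn (fun t : ℝ => t * exp (-b * t)) (Ioi 0) := by
  simpa using integrableOn_rpow_mul_exp_neg_mul_rpow (s := 1) (by norm_num) one_pos hb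

lemma integral_mul_exp_neg_mul_Ioi {b : ℝ} (hb : 0 < b) :
    ∫ t in Ioi 0, t * exp (-b * t) = (b ^ 2)⁻¹ := by
  simpa [neg_mul, show (2 : ℝ) - 1 = 1 by norm_num] using
    integral_rpow_mul_exp_neg_mul_Ioi two_pos hb

lemma inv_one_add_sq_eq_integral {β u : ℝ} (hβ : 0 < β) (hu : -1 < u) :
    ((1 + u) ^ 2)⁻¹ = β ^ 2 * ∫ t in Ioi 0, t * exp (-(β * (1 + u)) * t) := by
  have hu' : 0 < 1 + u := by linarith
  rw [integral_mul_exp_neg_mul_Ioi (by positivity)]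
  field_simp

lemma MeasureTheory.IntegrableOn.mul_one_add_rpow_neg {g : ℝ → ℝ} {α : ℝ}
    (hg : IntegrableOn g (Ioi 0)) (hα : 0 ≤ α) :
    IntegrableOn (fun t => g t * (1 + t) ^ (-α)) (Ioi 0) := by
  refine hg.mul_bdd (c := 1)
    (by fun_prop : Measurable fun t : ℝ => (1 + t) ^ (-α)).aestronglyMeasurable ?_
  filter_upwards [ae_restrict_mem measurableSet_Ioi] with t (ht : 0 < t)
  have ht' : 1 ≤ 1 + t := by linarith
  rw [norm_of_nonneg (by positivity)]
  exact rpow_le_one_of_one_le_of_nonpos ht' (by linarith)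

lemma integrableOn_mul_exp_neg_mul_mul_one_add_rpow {α β : ℝ} (hα : 0 ≤ α) (hβ : 0 < β) :
    IntegrableOn (fun t => t * exp (-β * t) * (1 + t) ^ (-α)) (Ioi 0) :=
  (integrableOn_mul_exp_neg_mul hβ).mul_one_add_rpow_neg hα

lemma integrableOn_exp_neg_mul_mul_one_add_rpow {α β : ℝ} (hα : 0 ≤ α) (hβ : 0 < β) :
    IntegrableOn (fun t => exp (-β * t) * (1 + t) ^ (-α)) (Ioi 0) :=
  (exp_neg_integrableOn_Ioi 0 hβ).mul_one_add_rpow_neg hα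

section GammaMoment

variable {α β : ℝ}

lemma gammaDens_mul_exp_neg_mul (s u : ℝ) :
    gammaDens α β u * exp (-s * u) = β ^ α / Gamma α * (u ^ (α - 1) * exp (-(β + s) * u)) := by
  rw [gammaDens, neg_add, add_mul, exp_add]
  ring

lemma integrableOn_gammaDens_mul_exp_neg_mul {s : ℝ} (hα : 0 < α) (hs : 0 < β + s) :
    IntegrableOn (fun u => gammaDens α β u * exp (-s * u)) (Ioi 0) := by
  simp_rw [gammaDens_mul_exp_neg_mul]
  have h := integrableOn_rpow_mul_exp_neg_mul_rpow (s := α - 1) (by linarith) one_pos hs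
  simp only [rpow_one] at h
  exact h.const_mul _

lemma integral_gammaDens_mul_exp_neg_mul {s : ℝ} (hα : 0 < α) (hβ : 0 < β) (hs : 0 < β + s) :
    ∫ u in Ioi 0, gammaDens α β u * exp (-s * u) = (β / (β + s)) ^ α := by
  simp_rw [gammaDens_mul_exp_neg_mul, integral_const_mul, neg_mul,
    integral_rpow_mul_exp_neg_mul_Ioi hα hs, div_rpow hβ.le hs.le, one_div, inv_rpow hs.le]
  field_simp [(Gamma_pos_of_pos hα).ne']

lemma gammaDens_mul_mul_exp_eq (u t : ℝ) :
    gammaDens α β u * (t * exp (-(β * (1 + u)) * t))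
      = t * exp (-β * t) * (gammaDens α β u * exp (-(β * t) * u)) := by
  rw [mul_mul_mul_comm, ← exp_add]
  ring_nf

lemma integral_gammaDens_mul_exp_neg_mul_mul (hα : 0 < α) (hβ : 0 < β) {t : ℝ} (ht : 0 < t) :
    ∫ u in Ioi 0, gammaDens α β u * exp (-(β * t) * u) = (1 + t) ^ (-α) := by
  rw [integral_gammaDens_mul_exp_neg_mul hα hβ (by positivity),
    show β / (β + β * t) = (1 + t)⁻¹ by field_simp, inv_rpow (by positivity),
    rpow_neg (by positivity)]

lemma integrable_gammaDens_mul_mul_exp (hα : 0 < α) (hβ : 0 < β) :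
    Integrable (fun p : ℝ × ℝ => gammaDens α β p.1 * (p.2 * exp (-(β * (1 + p.1)) * p.2)))
      ((volume.restrict (Ioi 0)).prod (volume.restrict (Ioi 0))) := by
  refine (integrable_prod_iff' ?_).2 ⟨?_, ?_⟩
  · unfold gammaDens
    exact Measurable.aestronglyMeasurable (by fun_prop)
  · filter_upwards [ae_restrict_mem measurableSet_Ioi] with t (ht : 0 < t)
    simp_rw [gammaDens_mul_mul_exp_eq]
    exact (integrableOn_gammaDens_mul_exp_neg_mul hα (by positivity)).const_mul _
  · refine (integrableOn_mul_exp_neg_mul_mul_one_add_rpow hα.le hβ).congr_fun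
      (fun t (ht : 0 < t) => ?_) measurableSet_Ioi
    dsimp only
    rw [← integral_gammaDens_mul_exp_neg_mul_mul hα hβ ht, ← integral_const_mul]
    refine setIntegral_congr_fun measurableSet_Ioi (fun u (hu : 0 < u) => ?_)
    rw [norm_of_nonneg (by unfold gammaDens; positivity), gammaDens_mul_mul_exp_eq]

lemma integral_inv_one_add_sq_mul_gammaDens (hα : 0 < α) (hβ : 0 < β) :
    ∫ u in Ioi 0, ((1 + u) ^ 2)⁻¹ * gammaDens α β u
      = β ^ 2 * ∫ t in Ioi 0, t * exp (-β * t) * (1 + t) ^ (-α) := by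
  calc ∫ u in Ioi 0, ((1 + u) ^ 2)⁻¹ * gammaDens α β u
      = β ^ 2 * ∫ u in Ioi 0, ∫ t in Ioi 0, gammaDens α β u * (t * exp (-(β * (1 + u)) * t)) := by
        rw [← integral_const_mul]
        refine setIntegral_congr_fun measurableSet_Ioi (fun u (hu : 0 < u) => ?_)
        rw [inv_one_add_sq_eq_integral hβ (by linarith), integral_const_mul]
        ring
    _ = β ^ 2 * ∫ t in Ioi 0, ∫ u in Ioi 0, gammaDens α β u * (t * exp (-(β * (1 + u)) * t)) := by
        rw [integral_integral_swap (integrable_gammaDens_mul_mul_exp hα hβ)]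
    _ = β ^ 2 * ∫ t in Ioi 0, t * exp (-β * t) * (1 + t) ^ (-α) := by
        congr 1
        refine setIntegral_congr_fun measurableSet_Ioi (fun t ht => ?_)
        simp_rw [gammaDens_mul_mul_exp_eq, integral_const_mul,
          integral_gammaDens_mul_exp_neg_mul_mul hα hβ ht]

end GammaMoment

lemma hasDerivAt_exp_neg_mul_mul_one_add_rpow (α β : ℝ) {t : ℝ} (ht : -1 < t) :
    HasDerivAt (fun t => exp (-β * t) * (1 + t) ^ (1 - α))
      (-β * (t * exp (-β * t) * (1 + t) ^ (-α))
        + (1 - α - β) * (exp (-β * t) * (1 + t) ^ (-α))) t := by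
  have ht' : 0 < 1 + t := by linarith
  have hexp : HasDerivAt (fun t => exp (-β * t)) (exp (-β * t) * -β) t := by
    simpa using ((hasDerivAt_id t).const_mul (-β)).exp
  have hpow : HasDerivAt (fun t => (1 + t) ^ (1 - α)) (1 * (1 - α) * (1 + t) ^ (1 - α - 1)) t :=
    ((hasDerivAt_id t).const_add 1).rpow_const (Or.inl ht'.ne')
  refine (hexp.mul hpow).congr_deriv ?_
  rw [sub_sub_cancel_left, sub_eq_add_neg, rpow_add ht', rpow_one]
  ring

lemma tendsto_exp_neg_mul_mul_one_add_rpow_atTop (α : ℝ) {β : ℝ} (hβ : 0 < β) :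
    Tendsto (fun t => exp (-β * t) * (1 + t) ^ (1 - α)) atTop (𝓝 0) := by
  have h := ((tendsto_rpow_mul_exp_neg_mul_atTop_nhds_zero (1 - α) β hβ).comp
    (tendsto_atTop_add_const_left atTop 1 tendsto_id)).const_mul (exp β)
  rw [mul_zero] at h
  refine h.congr fun t => ?_
  simp only [Function.comp_apply, id]
  rw [mul_comm ((1 + t) ^ (1 - α)), ← mul_assoc, ← exp_add]
  ring_nf

lemma mul_integral_mul_exp_neg_mul_mul_one_add_rpow {α β : ℝ} (hα : 0 ≤ α) (hβ : 0 < β) :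
    β * ∫ t in Ioi 0, t * exp (-β * t) * (1 + t) ^ (-α)
      = 1 + (1 - α - β) * ∫ t in Ioi 0, exp (-β * t) * (1 + t) ^ (-α) := by
  have hL := integrableOn_mul_exp_neg_mul_mul_one_add_rpow hα hβ
  have hL₀ := integrableOn_exp_neg_mul_mul_one_add_rpow hα hβ
  have h := integral_Ioi_of_hasDerivAt_of_tendsto'
    (fun t ht => hasDerivAt_exp_neg_mul_mul_one_add_rpow α β (by linarith [mem_Ici.mp ht]))
    ((hL.const_mul _).add (hL₀.const_mul _)) (tendsto_exp_neg_mul_mul_one_add_rpow_atTop α hβ)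
  rw [integral_add (hL.const_mul _) (hL₀.const_mul _), integral_const_mul, integral_const_mul]
    at h
  simp only [mul_zero, exp_zero, add_zero, one_rpow, mul_one, zero_sub] at h
  linarith

lemma integral_exp_neg_mul_mul_one_add_rpow (α β : ℝ) :
    ∫ t in Ioi 0, exp (-β * t) * (1 + t) ^ (-α) = exp β * expIntE α β := by
  have h := setIntegral_Ioi_comp_add_right (fun s => exp (-β * s) * s ^ (-α)) 0 1
  rw [zero_add] at h
  rw [expIntE, ← h, ← integral_const_mul]
  refine setIntegral_congr_fun measurableSet_Ioi (fun t _ => ?_)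
  rw [add_comm t, ← mul_assoc, ← exp_add]
  ring_nf

theorem gamma_inverse_square_shift_moment (α β : ℝ) (hα : 0 < α) (hβ : 0 < β) :
    (∫ u in Set.Ioi (0 : ℝ), ((1 + u) ^ 2)⁻¹ * gammaDens α β u) =
      β - 1 + Real.exp β * β * (1 - α - β) * expIntE α β + 1 ∧
    (∫ u in Set.Ioi (0 : ℝ), ((1 + u) ^ 2)⁻¹ * gammaDens α β u) =
      β - Real.exp β * β * (α + β - 1) * expIntE α β := by
  have hmoment := integral_inv_one_add_sq_mul_gammaDens hα hβ
  have hparts := mul_integral_mul_exp_neg_mul_mul_one_add_rpow hα.le hβ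
  rw [integral_exp_neg_mul_mul_one_add_rpow] at hparts
  constructor <;> linear_combination hmoment + β * hparts
end

section
/- For α > 0 and β > 0, the series ∑_{k=1}^∞ (1/k) Γ(k+α) U(k+α, 1+α, β) converges, where U(a,b,z) = (1/Γ(a)) ∫₀^∞ (1+u)^{b−a−1} u^{a−1} e^{−zu} du. -/
/-!
With `t = u / (1 + u) ∈ [0, 1)`, the `k`-th term is `(1 / k) ∫₀^∞ t^k u^(α-1) e^(-βu) du`.
Dropping the factor `1 / k`, the partial sums of `∑ t^k` are bounded by `t / (1 - t) = u`, so
all partial sums of the series are bounded by `∫₀^∞ u^α e^(-βu) du < ∞`.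
-/

open MeasureTheory Set Real Finset

lemma integrableOn_rpow_mul_exp_neg_mul {s b : ℝ} (hs : -1 < s) (hb : 0 < b) :
    IntegrableOn (fun u : ℝ => u ^ s * exp (-b * u)) (Ioi 0) := by
  simpa using integrableOn_rpow_mul_exp_neg_mul_rpow hs one_pos hb

lemma sum_range_pow_succ_le_div_one_sub {t : ℝ} (ht₀ : 0 ≤ t) (ht₁ : t < 1) (n : ℕ) :
    ∑ k ∈ range n, t ^ (k + 1) ≤ t / (1 - t) := by
  calc ∑ k ∈ range n, t ^ (k + 1) = t * ∑ k ∈ range n, t ^ k := by simp_rw [pow_succ', mul_sum]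
    _ ≤ t * (1 / (1 - t)) := by
      gcongr
      simpa [← range_eq_Ico] using geom_sum_Ico_le_of_lt_one (m := 0) (n := n) ht₀ ht₁
    _ = t / (1 - t) := mul_one_div t _

lemma summable_integral_pow_succ_mul {X : Type*} [MeasurableSpace X] {μ : Measure X}
    {t g : X → ℝ} (ht : AEMeasurable t μ) (hg : AEStronglyMeasurable g μ)
    (ht₀₁ : ∀ᵐ x ∂μ, 0 ≤ t x ∧ t x < 1) (hg₀ : ∀ᵐ x ∂μ, 0 ≤ g x)
    (hint : Integrable (fun x => t x / (1 - t x) * g x) μ) :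
    Summable fun n : ℕ => ∫ x, t x ^ (n + 1) * g x ∂μ := by
  have hint_pow (n : ℕ) : Integrable (fun x => t x ^ (n + 1) * g x) μ := by
    refine hint.mono' ((ht.pow_const _).aestronglyMeasurable.mul hg) ?_
    filter_upwards [ht₀₁, hg₀] with x ⟨ht₀, ht₁⟩ hg₀
    rw [norm_mul, norm_of_nonneg (by positivity), norm_of_nonneg hg₀]
    gcongr
    calc t x ^ (n + 1) ≤ t x := pow_le_of_le_one ht₀ ht₁.le n.succ_ne_zero
      _ ≤ t x / (1 - t x) := le_div_self ht₀ (by linarith) (by linarith)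
  refine summable_of_sum_range_le (c := ∫ x, t x / (1 - t x) * g x ∂μ)
    (fun n => integral_nonneg_of_ae ?_) (fun n => ?_)
  · filter_upwards [ht₀₁, hg₀] with x ⟨ht₀, _⟩ hg₀
    positivity
  rw [← integral_finsetSum _ fun n _ => hint_pow n]
  refine integral_mono_ae (integrable_finsetSum _ fun n _ => hint_pow n) hint ?_
  filter_upwards [ht₀₁, hg₀] with x ⟨ht₀, ht₁⟩ hg₀
  rw [← sum_mul]
  exact mul_le_mul_of_nonneg_right (sum_range_pow_succ_le_div_one_sub ht₀ ht₁ n) hg₀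

lemma Gamma_mul_kummerU {a b z : ℝ} (ha : Gamma a ≠ 0) :
    Gamma a * KummerU a b z =
      ∫ u in Ioi 0, (1 + u) ^ (b - a - 1) * u ^ (a - 1) * exp (-z * u) := by
  rw [KummerU, ← mul_assoc, mul_one_div_cancel ha, one_mul]

lemma one_add_rpow_neg_mul_rpow_add {u : ℝ} (hu : 0 < u) (n : ℕ) (s : ℝ) :
    (1 + u) ^ (-(n : ℝ)) * u ^ (n + s) = (u / (1 + u)) ^ n * u ^ s := by
  rw [rpow_neg (by positivity), rpow_add hu, rpow_natCast, rpow_natCast, div_pow]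
  ring

lemma Gamma_mul_kummerU_nat_add {α : ℝ} (hα : 0 < α) (n : ℕ) (β : ℝ) :
    Gamma (n + α) * KummerU (n + α) (1 + α) β =
      ∫ u in Ioi 0, (u / (1 + u)) ^ n * (u ^ (α - 1) * exp (-β * u)) := by
  rw [Gamma_mul_kummerU (Gamma_pos_of_pos (by positivity)).ne']
  refine setIntegral_congr_fun measurableSet_Ioi fun u (hu : 0 < u) => ?_
  rw [show 1 + α - (n + α) - 1 = -(n : ℝ) by ring, show (n : ℝ) + α - 1 = n + (α - 1) by ring,
    one_add_rpow_neg_mul_rpow_add hu, mul_assoc]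

theorem summable_gamma_kummerU_series (α β : ℝ) (hα : 0 < α) (hβ : 0 < β) :
    Summable (fun k : ℕ => (1 / ((k : ℝ) + 1)) * Real.Gamma (((k : ℝ) + 1) + α) *
      KummerU (((k : ℝ) + 1) + α) (1 + α) β) := by
  set g : ℝ → ℝ := fun u => u ^ (α - 1) * exp (-β * u)
  set I : ℕ → ℝ := fun n => ∫ u in Ioi 0, (u / (1 + u)) ^ n * g u
  have hI_nonneg (n : ℕ) : 0 ≤ I n :=
    setIntegral_nonneg measurableSet_Ioi fun u (hu : 0 < u) => by positivity
  have hI : Summable fun k : ℕ => I (k + 1) := by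
    refine summable_integral_pow_succ_mul (by fun_prop)
      (integrableOn_rpow_mul_exp_neg_mul (by linarith) hβ).aestronglyMeasurable ?_ ?_ ?_
    · filter_upwards [ae_restrict_mem measurableSet_Ioi] with u (hu : 0 < u)
      exact ⟨by positivity, (div_lt_one (by positivity)).2 (by linarith)⟩
    · filter_upwards [ae_restrict_mem measurableSet_Ioi] with u (hu : 0 < u)
      positivity
    · refine (integrableOn_rpow_mul_exp_neg_mul (s := α) (by linarith) hβ).congr_fun
        (fun u (hu : 0 < u) => ?_) measurableSet_Ioi
      have : u / (1 + u) / (1 - u / (1 + u)) = u := by field_simp; ring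
      rw [this, ← mul_assoc, ← rpow_one_add' hu.le (by linarith), add_sub_cancel]
  have hterm (k : ℕ) : (1 / ((k : ℝ) + 1)) * Gamma (((k : ℝ) + 1) + α) *
      KummerU (((k : ℝ) + 1) + α) (1 + α) β = 1 / ((k : ℝ) + 1) * I (k + 1) := by
    rw [mul_assoc, ← Nat.cast_succ, Gamma_mul_kummerU_nat_add hα]
  simp_rw [hterm]
  refine hI.of_nonneg_of_le (fun k => mul_nonneg (by positivity) (hI_nonneg _)) fun k => ?_
  exact mul_le_of_le_one_left (hI_nonneg _) (div_le_one_of_le₀ (by simp) (by positivity))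
end
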